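/- arXiv:1512.09278 — 2 statements merged into one kernel-verified Lean document; each statement's English description precedes it below -/
import Mathlib

section
/- For every nonnegative integer N, every complex u ≠ 1, and every radius r with 0 < r < |1−u|, the contour integral (1/(2πi)) ∮_{|z|=r} z·(1 + 1/(u+z−1))^N (1 − 1/z)^N dz over the circle of radius r centered at 0 traversed counterclockwise equals ((1−u)/2)·f_{N,N}(u) − u·N/2. -/
/-! With `v = 1 - u`, the integrand factors as `(1 - u / g z) ^ N` where `g z = z * (z - v)`, and
`z = v / 2 + g' z / 2`; the `v / 2` part gives the integral defining `f N N u` (the radius does not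
matter by Cauchy's theorem on an annulus). Expanding `(1 - u / g) ^ N` binomially, each term
`g' * g ^ (-k)` with `k ≠ 1` has the primitive `g ^ (1 - k) / (1 - k)` on the circle, while
`g' / g = 1 / z + 1 / (z - v)` integrates to `2πi`, since `v` lies outside the disc. -/

/-- `f A B u` is the contour integral
`(1/(2πi)) ∮_{|z|=r} (1 + 1/(u+z−1))^A (1 − 1/z)^B dz`
over a circle of radius `0 < r < |1−u|` centered at `0` (here `r = |1−u|/2`);
the value is independent of the choice of such `r`. -/
noncomputable def f (A B : ℕ) (u : ℂ) : ℂ :=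
  (2 * Real.pi * Complex.I)⁻¹ *
    (∮ z in C(0, ‖1 - u‖ / 2), (1 + (u + z - 1)⁻¹) ^ A * (1 - z⁻¹) ^ B)

open Complex Metric Finset Real

theorem sphere_subset_ball_diff_center {c : ℂ} {r R : ℝ} (hr : 0 < r) (hrR : r < R) :
    sphere c r ⊆ ball c R \ {c} := fun z hz =>
  ⟨mem_ball.2 ((mem_sphere.1 hz).trans_lt hrR), fun h => by
    rw [h, mem_sphere, dist_self] at hz; exact hr.ne hz⟩

theorem circleIntegral_eq_of_differentiableOn_ball_diff_center {E : Type*} [NormedAddCommGroup E]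
    [NormedSpace ℂ E] {f : ℂ → E} {c : ℂ} {R a b : ℝ}
    (hf : DifferentiableOn ℂ f (ball c R \ {c})) (ha : 0 < a) (haR : a < R) (hb : 0 < b)
    (hbR : b < R) : (∮ z in C(c, a), f z) = ∮ z in C(c, b), f z := by
  wlog hab : a ≤ b generalizing a b
  · exact (this hb hbR ha haR (le_of_not_ge hab)).symm
  have hsub : closedBall c b \ ball c a ⊆ ball c R \ {c} := fun z ⟨hzb, hza⟩ =>
    ⟨(mem_closedBall.1 hzb).trans_lt hbR, fun hzc => hza (hzc ▸ mem_ball_self ha)⟩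
  refine (circleIntegral_eq_of_differentiable_on_annulus_off_countable ha hab
    Set.countable_empty (hf.continuousOn.mono hsub) fun z hz => ?_).symm
  exact hf.differentiableAt ((isOpen_ball.sdiff isClosed_singleton).mem_nhds
    (hsub ⟨ball_subset_closedBall hz.1.1, fun h => hz.1.2 (ball_subset_closedBall h)⟩))

theorem circleIntegral_sub_inv_of_notMem_closedBall {c w : ℂ} {R : ℝ} (hR : 0 ≤ R)
    (hw : w ∉ closedBall c R) : (∮ z in C(c, R), (z - w)⁻¹) = 0 := by
  have hne : ∀ z ∈ closedBall c R, z - w ≠ 0 := fun z hz h => hw (sub_eq_zero.1 h ▸ hz)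
  exact circleIntegral_eq_zero_of_differentiable_on_off_countable hR Set.countable_empty
    (fun z hz => ((continuousAt_id.sub continuousAt_const).inv₀ (hne z hz)).continuousWithinAt)
    fun z hz => (differentiableAt_id.sub_const w).inv (hne z (ball_subset_closedBall hz.1))

theorem circleIntegral_deriv_mul_zpow_eq_zero {g g' : ℂ → ℂ} {c : ℂ} {R : ℝ} (hR : 0 ≤ R)
    {n : ℤ} (hn : n ≠ -1) (hg : ∀ z ∈ sphere c R, HasDerivAt g (g' z) z)
    (hg0 : ∀ z ∈ sphere c R, g z ≠ 0) : (∮ z in C(c, R), g' z * g z ^ n) = 0 := by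
  have hn' : (n : ℂ) + 1 ≠ 0 := by exact_mod_cast fun h => hn (by omega)
  refine circleIntegral.integral_eq_zero_of_hasDerivWithinAt hR
    (f := fun z => g z ^ (n + 1) / (n + 1)) fun z hz => ?_
  have := ((hasDerivAt_zpow (n + 1) (g z) (Or.inl (hg0 z hz))).comp z (hg z hz)).div_const
    ((n : ℂ) + 1)
  refine (this.congr_deriv ?_).hasDerivWithinAt
  rw [add_sub_cancel_right]
  push_cast
  field_simp

theorem one_sub_mul_inv_pow_eq_sum {K : Type*} [Field K] (a w : K) (N : ℕ) :
    (1 - a * w⁻¹) ^ N = ∑ k ∈ range (N + 1), (N.choose k : K) * (-a) ^ k * w ^ (-(k : ℤ)) := by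
  rw [sub_eq_neg_add, add_pow]
  refine sum_congr rfl fun k _ => ?_
  rw [one_pow, mul_one, zpow_neg, zpow_natCast, ← neg_mul, mul_pow, inv_pow]
  ring

theorem add_sub_one_ne_zero_of_norm_lt {u z : ℂ} (h : ‖z‖ < ‖1 - u‖) : u + z - 1 ≠ 0 := by
  intro h0
  rw [show z = 1 - u by linear_combination h0] at h
  exact lt_irrefl _ h

theorem one_add_inv_mul_one_sub_inv {u z : ℂ} (hz : z ≠ 0) (hz' : u + z - 1 ≠ 0) :
    (1 + (u + z - 1)⁻¹) * (1 - z⁻¹) = 1 - u * (z * (u + z - 1))⁻¹ := by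
  field_simp
  ring

theorem differentiableOn_integrand (A B : ℕ) (u : ℂ) :
    DifferentiableOn ℂ (fun z => (1 + (u + z - 1)⁻¹) ^ A * (1 - z⁻¹) ^ B)
      (ball 0 ‖1 - u‖ \ {0}) := by
  rintro z ⟨hz, hz0 : z ≠ 0⟩
  have hz' : u + z - 1 ≠ 0 := add_sub_one_ne_zero_of_norm_lt (mem_ball_zero_iff.1 hz)
  refine DifferentiableAt.differentiableWithinAt ?_
  exact (((differentiableAt_const 1).add
    (((differentiableAt_id.const_add u).sub_const 1).inv hz')).pow A).mul
    (((differentiableAt_const 1).sub (differentiableAt_id.inv hz0)).pow B)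

theorem ne_zero_and_add_sub_one_ne_zero_of_mem_sphere {u z : ℂ} {r : ℝ} (hr : 0 < r)
    (hr' : r < ‖1 - u‖) (hz : z ∈ sphere (0 : ℂ) r) : z ≠ 0 ∧ u + z - 1 ≠ 0 :=
  ⟨(sphere_subset_ball_diff_center hr hr' hz).2,
    add_sub_one_ne_zero_of_norm_lt ((mem_sphere_zero_iff_norm.1 hz).trans_lt hr')⟩

theorem circleIntegral_two_mul_add_sub_one_mul_zpow_neg (u : ℂ) {r : ℝ} (hr : 0 < r)
    (hr' : r < ‖1 - u‖) (k : ℕ) :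
    (∮ z in C(0, r), (2 * z + u - 1) * (z * (u + z - 1)) ^ (-(k : ℤ))) =
      if k = 1 then 2 * π * I else 0 := by
  have hsph : ∀ z ∈ sphere (0 : ℂ) r, z ≠ 0 ∧ u + z - 1 ≠ 0 := fun z hz =>
    ne_zero_and_add_sub_one_ne_zero_of_mem_sphere hr hr' hz
  split_ifs with hk
  · subst hk
    have hpf : ∀ z ∈ sphere (0 : ℂ) r, (2 * z + u - 1) * (z * (u + z - 1)) ^ (-((1 : ℕ) : ℤ)) =
        (z - 0)⁻¹ + (z - (1 - u))⁻¹ := fun z hz => by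
      obtain ⟨hz, hz'⟩ := hsph z hz
      have hz'' : z - (1 - u) ≠ 0 := by rwa [sub_sub_eq_add_sub, add_comm]
      rw [Nat.cast_one, zpow_neg_one]
      field_simp
      ring
    have hout : 1 - u ∉ closedBall (0 : ℂ) r := by
      rw [mem_closedBall_zero_iff, not_le]; exact hr'
    rw [circleIntegral.integral_congr hr.le hpf, circleIntegral.integral_add
      (circleIntegrable_sub_inv_iff.2 (Or.inr (by simp [abs_of_pos hr, hr.ne])))
      (circleIntegrable_sub_inv_iff.2 (Or.inr fun h => hout (sphere_subset_closedBall (by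
        rwa [abs_of_pos hr] at h)))),
      circleIntegral.integral_sub_center_inv 0 hr.ne',
      circleIntegral_sub_inv_of_notMem_closedBall hr.le hout, add_zero]
  · refine circleIntegral_deriv_mul_zpow_eq_zero hr.le (by omega) (fun z _ => ?_)
      fun z hz => mul_ne_zero (hsph z hz).1 (hsph z hz).2
    exact ((hasDerivAt_id z).mul (((hasDerivAt_id z).const_add u).sub_const 1)).congr_deriv
      (by simp only [id]; ring)

theorem circleIntegral_two_mul_add_sub_one_mul_integrand (N : ℕ) (u : ℂ) {r : ℝ} (hr : 0 < r)
    (hr' : r < ‖1 - u‖) :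
    (∮ z in C(0, r), (2 * z + u - 1) * ((1 + (u + z - 1)⁻¹) ^ N * (1 - z⁻¹) ^ N)) =
      -u * N * (2 * π * I) := by
  have hsph : ∀ z ∈ sphere (0 : ℂ) r, z ≠ 0 ∧ u + z - 1 ≠ 0 := fun z hz =>
    ne_zero_and_add_sub_one_ne_zero_of_mem_sphere hr hr' hz
  have hexpand : ∀ z ∈ sphere (0 : ℂ) r,
      (2 * z + u - 1) * ((1 + (u + z - 1)⁻¹) ^ N * (1 - z⁻¹) ^ N) =
        ∑ k ∈ range (N + 1), (N.choose k : ℂ) * (-u) ^ k *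
          ((2 * z + u - 1) * (z * (u + z - 1)) ^ (-(k : ℤ))) := fun z hz => by
    rw [← mul_pow, one_add_inv_mul_one_sub_inv (hsph z hz).1 (hsph z hz).2,
      one_sub_mul_inv_pow_eq_sum, mul_sum]
    exact sum_congr rfl fun k _ => by ring
  have hint : ∀ k ∈ range (N + 1), CircleIntegrable (fun z => (N.choose k : ℂ) * (-u) ^ k *
      ((2 * z + u - 1) * (z * (u + z - 1)) ^ (-(k : ℤ)))) 0 r := fun k _ => by
    refine ContinuousOn.circleIntegrable hr.le (continuousOn_const.mul (Continuous.continuousOn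
      (by fun_prop) |>.mul fun z hz => ContinuousAt.continuousWithinAt ?_))
    exact ((continuous_id.mul ((continuous_const.add continuous_id).sub
      continuous_const)).continuousAt.zpow₀ _ (Or.inl (mul_ne_zero (hsph z hz).1 (hsph z hz).2)))
  rw [circleIntegral.integral_congr hr.le hexpand, circleIntegral.integral_fun_sum hint]
  simp_rw [circleIntegral.integral_const_mul,
    circleIntegral_two_mul_add_sub_one_mul_zpow_neg u hr hr']
  rw [sum_eq_single 1 (fun k _ hk => by rw [if_neg hk, mul_zero]) fun h => by
    rw [Nat.choose_eq_zero_of_lt (by simpa using h)]; simp]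
  simp only [if_true, Nat.choose_one_right, pow_one]
  ring

theorem stmt7_general (N : ℕ) (u : ℂ) (r : ℝ) (hr : 0 < r)
    (hr' : r < ‖1 - u‖) :
    (2 * Real.pi * Complex.I)⁻¹ *
      (∮ z in C(0, r), z * ((1 + (u + z - 1)⁻¹) ^ N * (1 - z⁻¹) ^ N)) =
    ((1 - u) / 2) * f N N u - u * (N : ℂ) / 2 := by
  set F : ℂ → ℂ := fun z => (1 + (u + z - 1)⁻¹) ^ N * (1 - z⁻¹) ^ N
  have hFc : ContinuousOn F (sphere 0 r) :=
    (differentiableOn_integrand N N u).continuousOn.mono (sphere_subset_ball_diff_center hr hr')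
  have hsplit : (∮ z in C(0, r), z * F z) =
      (1 - u) / 2 * (∮ z in C(0, r), F z) + 1 / 2 * ∮ z in C(0, r), (2 * z + u - 1) * F z := by
    have hint : CircleIntegrable (fun z => (1 - u) / 2 * F z) 0 r :=
      (continuousOn_const.mul hFc).circleIntegrable hr.le
    have hint' : CircleIntegrable (fun z => 1 / 2 * ((2 * z + u - 1) * F z)) 0 r :=
      (continuousOn_const.mul ((by fun_prop : Continuous fun z : ℂ => 2 * z + u - 1)
        |>.continuousOn.mul hFc)).circleIntegrable hr.le
    rw [← circleIntegral.integral_const_mul, ← circleIntegral.integral_const_mul,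
      ← circleIntegral.integral_add hint hint']
    exact circleIntegral.integral_congr hr.le fun z _ => by ring
  have hρ : 0 < ‖1 - u‖ / 2 := half_pos (hr.trans hr')
  rw [hsplit, circleIntegral_two_mul_add_sub_one_mul_integrand N u hr hr', f,
    circleIntegral_eq_of_differentiableOn_ball_diff_center (differentiableOn_integrand N N u)
      hr hr' hρ (half_lt_self (hr.trans hr'))]
  field_simp
  ring

/-- `(1/(2πi)) ∮ z (1 + 1/(u+z−1))^N (1 − 1/z)^N dz = ((1−u)/2) f_{N,N}(u) − uN/2`. -/
theorem stmt7 (N : ℕ) (u : ℂ) (hu : u ≠ 1) (r : ℝ) (hr : 0 < r)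
    (hr' : r < ‖1 - u‖) :
    (2 * Real.pi * Complex.I)⁻¹ *
      (∮ z in C(0, r), z * ((1 + (u + z - 1)⁻¹) ^ N * (1 - z⁻¹) ^ N)) =
    ((1 - u) / 2) * f N N u - u * (N : ℂ) / 2 :=
  stmt7_general N u r hr hr'
end

section
/- For every integer N ≥ 1 and every complex u with u ∉ {0, 1, −1}, the function u ↦ f_{N,N}(u) satisfies the second-order linear differential equation f''_{N,N}(u) + (4N/(u²−1))·f'_{N,N}(u) − (2N/(u(u²−1)))·f_{N,N}(u) = 0, where f'_{N,N} and f''_{N,N} denote the first and second derivatives of u ↦ f_{N,N}(u). -/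
open Complex Metric Set Filter Topology

section CircleIntegral

variable {E : Type*} [NormedAddCommGroup E] [NormedSpace ℂ E]

theorem circleIntegral_eq_of_differentiableOn_ball_diff {f : ℂ → E} {c : ℂ} {r R ρ : ℝ}
    (hr : 0 < r) (hR : 0 < R) (hrρ : r < ρ) (hRρ : R < ρ)
    (hf : DifferentiableOn ℂ f (ball c ρ \ {c})) :
    (∮ z in C(c, r), f z) = ∮ z in C(c, R), f z := by
  have key : ∀ {a b : ℝ}, 0 < a → a ≤ b → b < ρ →
      (∮ z in C(c, b), f z) = ∮ z in C(c, a), f z := fun {a b} ha hab hbρ => by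
    have hsub : closedBall c b \ ball c a ⊆ ball c ρ \ {c} := fun z ⟨hzb, hza⟩ =>
      ⟨closedBall_subset_ball hbρ hzb,
        fun hzc => hza (by rw [mem_singleton_iff.1 hzc]; exact mem_ball_self ha)⟩
    exact circleIntegral_eq_of_differentiable_on_annulus_off_countable ha hab countable_empty
      (hf.mono hsub).continuousOn fun z hz =>
        hf.differentiableAt <| (isOpen_ball.sdiff isClosed_singleton).mem_nhds <|
          hsub ⟨ball_subset_closedBall hz.1.1, fun h => hz.1.2 (ball_subset_closedBall h)⟩
  rcases le_total r R with h | h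
  · exact (key hr h hRρ).symm
  · exact key hR h hrρ

theorem hasDerivAt_circleIntegral_of_continuousOn {F F' : ℂ → ℂ → E} {U : Set ℂ} {c : ℂ} {R : ℝ}
    (hU : IsOpen U) (hF : ContinuousOn (Function.uncurry F) (U ×ˢ sphere c |R|))
    (hF' : ContinuousOn (Function.uncurry F') (U ×ˢ sphere c |R|))
    (hd : ∀ v ∈ U, ∀ z ∈ sphere c |R|, HasDerivAt (F · z) (F' v z) v) {v₀ : ℂ} (hv₀ : v₀ ∈ U) :
    HasDerivAt (fun v => ∮ z in C(c, R), F v z) (∮ z in C(c, R), F' v₀ z) v₀ := by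
  obtain ⟨ε, hε, hεU⟩ := nhds_basis_closedBall.mem_iff.1 (hU.mem_nhds hv₀)
  obtain ⟨C, hC⟩ := ((isCompact_closedBall v₀ ε).prod (isCompact_sphere c |R|))
    |>.exists_bound_of_continuousOn (hF'.mono (prod_mono hεU le_rfl))
  have hcont : ∀ {G : ℂ → ℂ → E}, ContinuousOn (Function.uncurry G) (U ×ˢ sphere c |R|) →
      ∀ v ∈ closedBall v₀ ε, Continuous fun θ => deriv (circleMap c R) θ • G v (circleMap c R θ) :=
    fun hG v hv => by
      simp only [deriv_circleMap]
      exact (by fun_prop : Continuous fun θ => circleMap 0 R θ * I).smul <|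
        hG.comp_continuous (continuous_const.prodMk (continuous_circleMap c R))
          fun θ => ⟨hεU hv, circleMap_mem_sphere' c R θ⟩
  simp only [circleIntegral]
  refine (intervalIntegral.hasDerivAt_integral_of_dominated_loc_of_deriv_le
    (F := fun v θ => deriv (circleMap c R) θ • F v (circleMap c R θ))
    (F' := fun v θ => deriv (circleMap c R) θ • F' v (circleMap c R θ))
    (μ := MeasureTheory.volume) (bound := fun _ => |R| * C) (ball_mem_nhds v₀ hε)
    ?_ ?_ ?_ ?_ intervalIntegrable_const ?_).2
  · filter_upwards [closedBall_mem_nhds v₀ hε] with v hv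
    exact (hcont hF v hv).aestronglyMeasurable
  · exact (hcont hF v₀ (mem_closedBall_self hε.le)).intervalIntegrable _ _
  · exact (hcont hF' v₀ (mem_closedBall_self hε.le)).aestronglyMeasurable
  · refine .of_forall fun θ _ v hv => ?_
    rw [norm_smul, deriv_circleMap, norm_mul, norm_circleMap_zero, norm_I, mul_one]
    exact mul_le_mul_of_nonneg_left
      (hC (v, _) ⟨ball_subset_closedBall hv, circleMap_mem_sphere' c R θ⟩) (abs_nonneg R)
  · exact .of_forall fun θ _ v hv =>
      (hd v (hεU (ball_subset_closedBall hv)) _ (circleMap_mem_sphere' c R θ)).const_smul _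

end CircleIntegral

theorem iteratedDeriv_two_eq_of_hasDerivAt {𝕜 F : Type*} [NontriviallyNormedField 𝕜]
    [NormedAddCommGroup F] [NormedSpace 𝕜 F] {f f' : 𝕜 → F} {f'' : F} {x : 𝕜}
    (hf : ∀ᶠ y in 𝓝 x, HasDerivAt f (f' y) y) (hf' : HasDerivAt f' f'' x) :
    iteratedDeriv 2 f x = f'' := by
  have hd : deriv f =ᶠ[𝓝 x] f' := hf.mono fun y hy => hy.deriv
  rw [iteratedDeriv_succ, iteratedDeriv_one, hd.deriv_eq, hf'.deriv]

noncomputable def kernel (u z : ℂ) : ℂ := (1 + (u + z - 1)⁻¹) * (1 - z⁻¹)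

noncomputable def kernelDeriv (u z : ℂ) : ℂ := -((u + z - 1)⁻¹) ^ 2 * (1 - z⁻¹)

noncomputable def kernelDeriv2 (u z : ℂ) : ℂ := 2 * ((u + z - 1)⁻¹) ^ 3 * (1 - z⁻¹)

noncomputable def kernelPowDeriv (N : ℕ) (u z : ℂ) : ℂ :=
  N * kernel u z ^ (N - 1) * kernelDeriv u z

noncomputable def kernelPowDeriv2 (N : ℕ) (u z : ℂ) : ℂ :=
  N * ((N - 1 : ℕ) * kernel u z ^ (N - 1 - 1) * kernelDeriv u z * kernelDeriv u z
    + kernel u z ^ (N - 1) * kernelDeriv2 u z)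

def kernelDomain : Set (ℂ × ℂ) := {p | p.2 ≠ 0 ∧ p.1 + p.2 - 1 ≠ 0}

theorem prod_sphere_subset_kernelDomain {r : ℝ} (hr : 0 < r) :
    {v : ℂ | r < ‖1 - v‖} ×ˢ sphere 0 |r| ⊆ kernelDomain := by
  rintro ⟨v, z⟩ ⟨hv : r < ‖1 - v‖, hz⟩
  rw [abs_of_pos hr, mem_sphere_zero_iff_norm] at hz
  refine ⟨ne_zero_of_norm_ne_zero (hz ▸ hr.ne'), fun h => hv.ne ?_⟩
  rw [← hz, show z = 1 - v by linear_combination h]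

theorem hasDerivAt_kernel_left (z : ℂ) {u : ℂ} (hw : u + z - 1 ≠ 0) :
    HasDerivAt (kernel · z) (kernelDeriv u z) u := by
  refine (((((hasDerivAt_id' u).add_const z).sub_const 1).fun_inv hw).const_add 1
    |>.mul_const (1 - z⁻¹)).congr_deriv ?_
  simp only [kernelDeriv, div_eq_mul_inv, ← inv_pow]
  ring

theorem hasDerivAt_kernelDeriv_left (z : ℂ) {u : ℂ} (hw : u + z - 1 ≠ 0) :
    HasDerivAt (kernelDeriv · z) (kernelDeriv2 u z) u := by
  refine ((((((hasDerivAt_id' u).add_const z).sub_const 1).fun_inv hw).fun_pow 2).neg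
    |>.mul_const (1 - z⁻¹)).congr_deriv ?_
  simp only [kernelDeriv2, div_eq_mul_inv, ← inv_pow]
  ring

theorem hasDerivAt_kernelPowDeriv_left (N : ℕ) (z : ℂ) {u : ℂ} (hw : u + z - 1 ≠ 0) :
    HasDerivAt (kernelPowDeriv N · z) (kernelPowDeriv2 N u z) u := by
  refine ((((hasDerivAt_kernel_left z hw).fun_pow (N - 1)).const_mul (N : ℂ)).fun_mul
    (hasDerivAt_kernelDeriv_left z hw)).congr_deriv ?_
  simp only [kernelPowDeriv2]
  ring

theorem hasDerivAt_kernel_right (u : ℂ) {z : ℂ} (hz : z ≠ 0) (hw : u + z - 1 ≠ 0) :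
    HasDerivAt (kernel u)
      (-((u + z - 1)⁻¹) ^ 2 * (1 - z⁻¹) + (1 + (u + z - 1)⁻¹) * (z⁻¹) ^ 2) z := by
  refine (((((hasDerivAt_id' z).const_add u).sub_const 1).fun_inv hw).const_add 1 |>.fun_mul
    ((hasDerivAt_inv hz).const_sub 1)).congr_deriv ?_
  field_simp

theorem continuousOn_kernel_pow (N : ℕ) :
    ContinuousOn (fun p : ℂ × ℂ => kernel p.1 p.2 ^ N) kernelDomain := by
  refine continuousOn_of_forall_continuousAt fun p ⟨hz, hw⟩ => ?_
  unfold kernel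
  fun_prop (disch := assumption)

theorem continuousOn_kernelPowDeriv (N : ℕ) :
    ContinuousOn (fun p : ℂ × ℂ => kernelPowDeriv N p.1 p.2) kernelDomain := by
  refine continuousOn_of_forall_continuousAt fun p ⟨hz, hw⟩ => ?_
  unfold kernelPowDeriv kernel kernelDeriv
  fun_prop (disch := assumption)

theorem continuousOn_kernelPowDeriv2 (N : ℕ) :
    ContinuousOn (fun p : ℂ × ℂ => kernelPowDeriv2 N p.1 p.2) kernelDomain := by
  refine continuousOn_of_forall_continuousAt fun p ⟨hz, hw⟩ => ?_
  unfold kernelPowDeriv2 kernel kernelDeriv kernelDeriv2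
  fun_prop (disch := assumption)

noncomputable def certificate (N : ℕ) (u z : ℂ) : ℂ :=
  -N / (u * (u ^ 2 - 1)) *
    ((2 * z + 3 * u - 1) * ((z - 1) * (u + z - 1)⁻¹) ^ 2 * kernel u z ^ (N - 1))

theorem hasDerivAt_certificate (N : ℕ) {u z : ℂ} (hu0 : u ≠ 0) (hu1 : u ^ 2 - 1 ≠ 0)
    (hz : z ≠ 0) (hw : u + z - 1 ≠ 0) :
    HasDerivAt (certificate N u)
      (kernelPowDeriv2 N u z + 4 * N / (u ^ 2 - 1) * kernelPowDeriv N u z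
        - 2 * N / (u * (u ^ 2 - 1)) * kernel u z ^ N) z := by
  have hfactor := ((((hasDerivAt_id' z).const_mul 2).add_const (3 * u)).sub_const 1).fun_mul
    ((((hasDerivAt_id' z).sub_const 1).fun_mul
      ((((hasDerivAt_id' z).const_add u).sub_const 1).fun_inv hw)).fun_pow 2)
  refine ((hfactor.fun_mul ((hasDerivAt_kernel_right u hz hw).fun_pow (N - 1))).const_mul
    (-N / (u * (u ^ 2 - 1)))).congr_deriv ?_
  unfold kernelPowDeriv2 kernelPowDeriv
  set g := kernel u z
  set K := g ^ (N - 1)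
  set D := ((N - 1 : ℕ) : ℂ) * g ^ (N - 1 - 1)
  -- `K` and `D` are treated as atoms; despite truncated subtraction, `hK` and `hD` also hold
  -- for `N = 0, 1`.
  have hK : (N : ℂ) * g ^ N = N * g * K := by
    rcases N with _ | N
    · simp
    · simp only [K, pow_succ, Nat.add_sub_cancel]; ring
  have hD : (N : ℂ) * D * g = N * (N - 1) * K := by
    rcases N with _ | _ | N
    · simp
    · simp [D, K]
    · simp only [D, K, pow_succ, Nat.add_sub_cancel]; push_cast; ring
  -- The terms carrying the factor `N - 1` cancel against part of the `4N/(u²-1)` term ...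
  have hquadratic : kernelDeriv u z ^ 2 + (2 * z + 3 * u - 1) * ((z - 1) * (u + z - 1)⁻¹) ^ 2 *
      (-((u + z - 1)⁻¹) ^ 2 * (1 - z⁻¹) + (1 + (u + z - 1)⁻¹) * (z⁻¹) ^ 2) / (u * (u ^ 2 - 1))
      = -4 * g * kernelDeriv u z / (u ^ 2 - 1) := by
    simp only [g, kernel, kernelDeriv]
    field_simp
    ring
  -- ... and what remains is the identity for `N = 1`.
  have hlinear : kernelDeriv2 u z + 4 * kernelDeriv u z / (u ^ 2 - 1) - 2 * g / (u * (u ^ 2 - 1))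
      + (2 * ((z - 1) * (u + z - 1)⁻¹) ^ 2 + (2 * z + 3 * u - 1) *
          (2 * ((z - 1) * (u + z - 1)⁻¹) * ((u + z - 1)⁻¹ - (z - 1) / (u + z - 1) ^ 2)))
        / (u * (u ^ 2 - 1)) = 0 := by
    simp only [g, kernel, kernelDeriv, kernelDeriv2]
    field_simp
    ring
  linear_combination (-(N : ℂ) * D) * hquadratic + (4 * kernelDeriv u z / (u ^ 2 - 1)) * hD
    + (2 / (u * (u ^ 2 - 1))) * hK - (N * K) * hlinear

theorem circleIntegral_kernelPow_ode (N : ℕ) {u : ℂ} (hu0 : u ≠ 0) (hu1 : u ^ 2 - 1 ≠ 0) {r : ℝ}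
    (hr : 0 < r) (hru : r < ‖1 - u‖) :
    (∮ z in C(0, r), kernelPowDeriv2 N u z)
      + 4 * N / (u ^ 2 - 1) * (∮ z in C(0, r), kernelPowDeriv N u z)
      - 2 * N / (u * (u ^ 2 - 1)) * (∮ z in C(0, r), kernel u z ^ N) = 0 := by
  have hS : ∀ z ∈ sphere (0 : ℂ) r, (u, z) ∈ kernelDomain := fun z hz =>
    prod_sphere_subset_kernelDomain hr (mk_mem_prod hru (by rwa [abs_of_pos hr]))
  have hint : ∀ {G : ℂ × ℂ → ℂ}, ContinuousOn G kernelDomain →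
      CircleIntegrable (fun z => G (u, z)) 0 r := fun hG =>
    (hG.comp (by fun_prop) hS).circleIntegrable hr.le
  have i2 : CircleIntegrable (kernelPowDeriv2 N u) 0 r := hint (continuousOn_kernelPowDeriv2 N)
  have i1 : CircleIntegrable (fun z => 4 * N / (u ^ 2 - 1) * kernelPowDeriv N u z) 0 r :=
    hint (continuousOn_const.mul (continuousOn_kernelPowDeriv N))
  have i0 : CircleIntegrable (fun z => 2 * N / (u * (u ^ 2 - 1)) * kernel u z ^ N) 0 r :=
    hint (continuousOn_const.mul (continuousOn_kernel_pow N))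
  have i21 : CircleIntegrable
      (fun z => kernelPowDeriv2 N u z + 4 * N / (u ^ 2 - 1) * kernelPowDeriv N u z) 0 r :=
    i2.add i1
  have h : (∮ z in C(0, r), (kernelPowDeriv2 N u z + 4 * N / (u ^ 2 - 1) * kernelPowDeriv N u z
      - 2 * N / (u * (u ^ 2 - 1)) * kernel u z ^ N)) = 0 :=
    circleIntegral.integral_eq_zero_of_hasDerivWithinAt hr.le fun z hz =>
      (hasDerivAt_certificate N hu0 hu1 (hS z hz).1 (hS z hz).2).hasDerivWithinAt
  rwa [circleIntegral.integral_sub i21 i0, circleIntegral.integral_add i2 i1,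
    circleIntegral.integral_const_mul, circleIntegral.integral_const_mul] at h

theorem f_eq_circleIntegral (A B : ℕ) {u : ℂ} {r : ℝ} (hr : 0 < r) (hru : r < ‖1 - u‖) :
    f A B u = (2 * Real.pi * I)⁻¹ * ∮ z in C(0, r), (1 + (u + z - 1)⁻¹) ^ A * (1 - z⁻¹) ^ B := by
  unfold f
  congr 1
  refine circleIntegral_eq_of_differentiableOn_ball_diff (by linarith) hr (by linarith) hru ?_
  rintro z ⟨hzu, hz : z ≠ 0⟩
  have hw : u + z - 1 ≠ 0 := fun h => by
    rw [mem_ball_zero_iff, show z = 1 - u by linear_combination h] at hzu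
    exact lt_irrefl _ hzu
  exact (by fun_prop (disch := assumption) :
    DifferentiableAt ℂ (fun z => (1 + (u + z - 1)⁻¹) ^ A * (1 - z⁻¹) ^ B) z).differentiableWithinAt

theorem hasDerivAt_circleIntegral_kernel_pow (N : ℕ) {r : ℝ} (hr : 0 < r) {u : ℂ}
    (hru : r < ‖1 - u‖) :
    HasDerivAt (fun v => ∮ z in C(0, r), kernel v z ^ N)
      (∮ z in C(0, r), kernelPowDeriv N u z) u :=
  hasDerivAt_circleIntegral_of_continuousOn (F := fun v z => kernel v z ^ N)
    (F' := kernelPowDeriv N)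
    (isOpen_lt continuous_const (by fun_prop))
    ((continuousOn_kernel_pow N).mono (prod_sphere_subset_kernelDomain hr))
    ((continuousOn_kernelPowDeriv N).mono (prod_sphere_subset_kernelDomain hr))
    (fun v hv z hz => (hasDerivAt_kernel_left z
      (prod_sphere_subset_kernelDomain hr (mk_mem_prod hv hz)).2).fun_pow N) hru

theorem hasDerivAt_circleIntegral_kernelPowDeriv (N : ℕ) {r : ℝ} (hr : 0 < r) {u : ℂ}
    (hru : r < ‖1 - u‖) :
    HasDerivAt (fun v => ∮ z in C(0, r), kernelPowDeriv N v z)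
      (∮ z in C(0, r), kernelPowDeriv2 N u z) u :=
  hasDerivAt_circleIntegral_of_continuousOn (F := kernelPowDeriv N) (F' := kernelPowDeriv2 N)
    (isOpen_lt continuous_const (by fun_prop))
    ((continuousOn_kernelPowDeriv N).mono (prod_sphere_subset_kernelDomain hr))
    ((continuousOn_kernelPowDeriv2 N).mono (prod_sphere_subset_kernelDomain hr))
    (fun v hv z hz => hasDerivAt_kernelPowDeriv_left N z
      (prod_sphere_subset_kernelDomain hr (mk_mem_prod hv hz)).2) hru

theorem stmt9_general (N : ℕ) (u : ℂ) (hu0 : u ≠ 0) (hu1 : u ≠ 1)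
    (hum1 : u ≠ -1) :
    iteratedDeriv 2 (f N N) u
      + (4 * (N : ℂ) / (u ^ 2 - 1)) * deriv (f N N) u
      - (2 * (N : ℂ) / (u * (u ^ 2 - 1))) * f N N u = 0 := by
  have hsq : u ^ 2 - 1 ≠ 0 := fun h => mul_ne_zero (sub_ne_zero.2 hu1)
    (fun h' => hum1 (eq_neg_of_add_eq_zero_left h')) (by linear_combination h)
  have h1u : 0 < ‖1 - u‖ := norm_pos_iff.2 (sub_ne_zero.2 hu1.symm)
  set r := ‖1 - u‖ / 2
  have hr : 0 < r := half_pos h1u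
  have hru : r < ‖1 - u‖ := half_lt_self h1u
  have hnhds : {v : ℂ | r < ‖1 - v‖} ∈ 𝓝 u :=
    (isOpen_lt continuous_const (by fun_prop)).mem_nhds hru
  have hf : f N N =ᶠ[𝓝 u] fun v => (2 * Real.pi * I)⁻¹ * ∮ z in C(0, r), kernel v z ^ N :=
    eventually_of_mem hnhds fun v hv => by
      simp only [f_eq_circleIntegral N N hr hv, kernel, mul_pow]
  rw [hf.iteratedDeriv_eq, hf.deriv_eq, hf.eq_of_nhds,
    ((hasDerivAt_circleIntegral_kernel_pow N hr hru).const_mul _).deriv,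
    iteratedDeriv_two_eq_of_hasDerivAt
      (eventually_of_mem hnhds fun v hv =>
        (hasDerivAt_circleIntegral_kernel_pow N hr hv).const_mul _)
      ((hasDerivAt_circleIntegral_kernelPowDeriv N hr hru).const_mul _)]
  linear_combination (2 * Real.pi * I)⁻¹ * circleIntegral_kernelPow_ode N hu0 hsq hr hru

/-- Lemma (Do–Norbury): `f''_{N,N} + (4N/(u²−1)) f'_{N,N} − (2N/(u(u²−1))) f_{N,N} = 0`. -/
theorem stmt9 (N : ℕ) (hN : 1 ≤ N) (u : ℂ) (hu0 : u ≠ 0) (hu1 : u ≠ 1)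
    (hum1 : u ≠ -1) :
    iteratedDeriv 2 (f N N) u
      + (4 * (N : ℂ) / (u ^ 2 - 1)) * deriv (f N N) u
      - (2 * (N : ℂ) / (u * (u ^ 2 - 1))) * f N N u = 0 :=
  stmt9_general N u hu0 hu1 hum1
end
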